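/- Fix k, m ∈ ℕ, a ∈ ℝ^k and b₁, …, b_m ∈ ℝ^k. Define Φ : ℂ × ℂ × ℂ^m × ℝ^k × ℝ^k → ℂ × ℂ × ℂ^m × ℝ^k × ℝ^k by Φ(z₁, z₂, w, θ, I) = (exp(−i⟨θ, a⟩)·z₁, exp(−i⟨θ, a⟩)·z₂, (exp(−i⟨θ, b_j⟩)·w_j)_{j=1..m}, θ, I + Σ_{j=1}^m |w_j|²·b_j + Im(conj(z₁)·z₂)·a). Then: (1) Φ is smooth; (2) Φ preserves the model moment map: q₁ ∘ Φ = q₁, q₂ ∘ Φ = q₂, |w_j|² ∘ Φ = |w_j|² for each j; (3) Φ is a symplectomorphism for ω = ω^f ⊕ (⊕_{j=1}^m ω̃^e) ⊕ ω^x: for every point p and all tangent vectors u, v, ω(DΦ(p)u, DΦ(p)v) = ω(u, v). -/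

import Mathlib

open scoped BigOperators

/-- `q₁(z₁, z₂) = Re (conj z₁ * z₂)` on `ℂ²`. -/
noncomputable def q1C (z₁ z₂ : ℂ) : ℝ := ((starRingEnd ℂ) z₁ * z₂).re

/-- `q₂(z₁, z₂) = Im (conj z₁ * z₂)` on `ℂ²`. -/
noncomputable def q2C (z₁ z₂ : ℂ) : ℝ := ((starRingEnd ℂ) z₁ * z₂).im

/-- The phase space `ℂ × ℂ × ℂ^m × ℝ^k × ℝ^k` of the model with one
focus-focus block, `m` elliptic blocks and `k` transverse blocks. -/
abbrev ModelSpace (k m : ℕ) :=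
  ℂ × ℂ × (Fin m → ℂ) × (Fin k → ℝ) × (Fin k → ℝ)

/-- The symplectic bilinear form `ω = ω^f ⊕ (⊕ⱼ ω̃^e) ⊕ ω^x` on the model space:
`ω^f(u, v) = Re (conj u₁ * v₂ − conj v₁ * u₂)` on `ℂ²`,
`ω̃^e(u, v) = 2 Im (u * conj v)` on each elliptic factor `ℂ`, and
`ω^x((u_θ, u_I), (v_θ, v_I)) = ⟨u_θ, v_I⟩ − ⟨v_θ, u_I⟩` on `ℝ^k × ℝ^k`. -/
noncomputable def omegaModel (k m : ℕ) (u v : ModelSpace k m) : ℝ :=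
  ((starRingEnd ℂ) u.1 * v.2.1 - (starRingEnd ℂ) v.1 * u.2.1).re +
    (∑ j, 2 * (u.2.2.1 j * (starRingEnd ℂ) (v.2.2.1 j)).im) +
    ((∑ j, u.2.2.2.1 j * v.2.2.2.2 j) - (∑ j, v.2.2.2.1 j * u.2.2.2.2 j))

/-- The map `ζ_B` of the paper, with `X^f = a` and rows of `X^e` equal to
`b₁, …, b_m`. -/
noncomputable def zetaB (k m : ℕ) (a : Fin k → ℝ) (b : Fin m → Fin k → ℝ) :
    ModelSpace k m → ModelSpace k m :=
  fun p =>
    (Complex.exp (-Complex.I * ((∑ j, p.2.2.2.1 j * a j) : ℝ)) * p.1,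
     Complex.exp (-Complex.I * ((∑ j, p.2.2.2.1 j * a j) : ℝ)) * p.2.1,
     fun i => Complex.exp (-Complex.I * ((∑ j, p.2.2.2.1 j * b i j) : ℝ)) * p.2.2.1 i,
     p.2.2.2.1,
     p.2.2.2.2 + (∑ i, Complex.normSq (p.2.2.1 i) • b i) + q2C p.1 p.2.1 • a)

/-! ### Auxiliary material -/

section Aux

lemma normSq_expI (t : ℝ) : Complex.normSq (Complex.exp (-Complex.I * t)) = 1 := by
  rw [Complex.normSq_eq_norm_sq, Complex.norm_exp]
  simp [Complex.mul_re]

lemma conjE_mul_E (t : ℝ) :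
    (starRingEnd ℂ) (Complex.exp (-Complex.I * t)) * Complex.exp (-Complex.I * t) = 1 := by
  rw [mul_comm, Complex.mul_conj, normSq_expI]
  norm_num

lemma keyConj (t : ℝ) (X Y : ℂ) :
    (starRingEnd ℂ) (Complex.exp (-Complex.I * t) * X) * (Complex.exp (-Complex.I * t) * Y) =
      (starRingEnd ℂ) X * Y := by
  rw [map_mul]
  calc (starRingEnd ℂ) (Complex.exp (-Complex.I * t)) * (starRingEnd ℂ) X *
        (Complex.exp (-Complex.I * t) * Y)
      = ((starRingEnd ℂ) (Complex.exp (-Complex.I * t)) * Complex.exp (-Complex.I * t)) *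
        ((starRingEnd ℂ) X * Y) := by ring
    _ = (starRingEnd ℂ) X * Y := by rw [conjE_mul_E, one_mul]

lemma keyMulConj (t : ℝ) (X Y : ℂ) :
    (Complex.exp (-Complex.I * t) * X) * (starRingEnd ℂ) (Complex.exp (-Complex.I * t) * Y) =
      X * (starRingEnd ℂ) Y := by
  rw [map_mul]
  calc Complex.exp (-Complex.I * t) * X *
        ((starRingEnd ℂ) (Complex.exp (-Complex.I * t)) * (starRingEnd ℂ) Y)
      = ((starRingEnd ℂ) (Complex.exp (-Complex.I * t)) * Complex.exp (-Complex.I * t)) *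
        (X * (starRingEnd ℂ) Y) := by ring
    _ = X * (starRingEnd ℂ) Y := by rw [conjE_mul_E, one_mul]

/-- Projection onto the first complex coordinate. -/
noncomputable def ZP1 (k m : ℕ) : ModelSpace k m →L[ℝ] ℂ :=
  ContinuousLinearMap.fst ℝ ℂ (ℂ × (Fin m → ℂ) × (Fin k → ℝ) × (Fin k → ℝ))

/-- Projection onto the second complex coordinate. -/
noncomputable def ZP2 (k m : ℕ) : ModelSpace k m →L[ℝ] ℂ :=
  (ContinuousLinearMap.fst ℝ ℂ ((Fin m → ℂ) × (Fin k → ℝ) × (Fin k → ℝ))).comp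
    (ContinuousLinearMap.snd ℝ ℂ (ℂ × (Fin m → ℂ) × (Fin k → ℝ) × (Fin k → ℝ)))

/-- Projection onto the elliptic coordinates. -/
noncomputable def ZPw (k m : ℕ) : ModelSpace k m →L[ℝ] (Fin m → ℂ) :=
  ((ContinuousLinearMap.fst ℝ (Fin m → ℂ) ((Fin k → ℝ) × (Fin k → ℝ))).comp
    (ContinuousLinearMap.snd ℝ ℂ ((Fin m → ℂ) × (Fin k → ℝ) × (Fin k → ℝ)))).comp
    (ContinuousLinearMap.snd ℝ ℂ (ℂ × (Fin m → ℂ) × (Fin k → ℝ) × (Fin k → ℝ)))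

/-- Projection onto the angle coordinates. -/
noncomputable def ZPth (k m : ℕ) : ModelSpace k m →L[ℝ] (Fin k → ℝ) :=
  (((ContinuousLinearMap.fst ℝ (Fin k → ℝ) (Fin k → ℝ)).comp
    (ContinuousLinearMap.snd ℝ (Fin m → ℂ) ((Fin k → ℝ) × (Fin k → ℝ)))).comp
    (ContinuousLinearMap.snd ℝ ℂ ((Fin m → ℂ) × (Fin k → ℝ) × (Fin k → ℝ)))).comp
    (ContinuousLinearMap.snd ℝ ℂ (ℂ × (Fin m → ℂ) × (Fin k → ℝ) × (Fin k → ℝ)))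

/-- Projection onto the action coordinates. -/
noncomputable def ZPI (k m : ℕ) : ModelSpace k m →L[ℝ] (Fin k → ℝ) :=
  (((ContinuousLinearMap.snd ℝ (Fin k → ℝ) (Fin k → ℝ)).comp
    (ContinuousLinearMap.snd ℝ (Fin m → ℂ) ((Fin k → ℝ) × (Fin k → ℝ)))).comp
    (ContinuousLinearMap.snd ℝ ℂ ((Fin m → ℂ) × (Fin k → ℝ) × (Fin k → ℝ)))).comp
    (ContinuousLinearMap.snd ℝ ℂ (ℂ × (Fin m → ℂ) × (Fin k → ℝ) × (Fin k → ℝ)))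

@[simp] lemma ZP1_apply {k m : ℕ} (u : ModelSpace k m) : ZP1 k m u = u.1 := rfl
@[simp] lemma ZP2_apply {k m : ℕ} (u : ModelSpace k m) : ZP2 k m u = u.2.1 := rfl
@[simp] lemma ZPw_apply {k m : ℕ} (u : ModelSpace k m) : ZPw k m u = u.2.2.1 := rfl
@[simp] lemma ZPth_apply {k m : ℕ} (u : ModelSpace k m) : ZPth k m u = u.2.2.2.1 := rfl
@[simp] lemma ZPI_apply {k m : ℕ} (u : ModelSpace k m) : ZPI k m u = u.2.2.2.2 := rfl

/-- The linear functional `p ↦ ∑ j, p_θ j * c j`. -/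
noncomputable def ZLa (k m : ℕ) (c : Fin k → ℝ) : ModelSpace k m →L[ℝ] ℝ :=
  ∑ j, c j • ((ContinuousLinearMap.proj j).comp (ZPth k m))

@[simp] lemma ZLa_apply (k m : ℕ) (c : Fin k → ℝ) (u : ModelSpace k m) :
    ZLa k m c u = ∑ j, u.2.2.2.1 j * c j := by
  simp [ZLa, mul_comm]

lemma sum_mul_eq_ZLa (k m : ℕ) (c : Fin k → ℝ) :
    (fun p : ModelSpace k m => (∑ j, p.2.2.2.1 j * c j)) = ⇑(ZLa k m c) := by
  funext p
  rw [ZLa_apply]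

/-- The derivative of `zetaB` at `p`, applied to `u`, in closed form. -/
noncomputable def Ddir (k m : ℕ) (a : Fin k → ℝ) (b : Fin m → Fin k → ℝ)
    (p u : ModelSpace k m) : ModelSpace k m :=
  (Complex.exp (-Complex.I * ((∑ j, p.2.2.2.1 j * a j : ℝ) : ℂ)) *
      (u.1 - Complex.I * ((∑ j, u.2.2.2.1 j * a j : ℝ) : ℂ) * p.1),
   Complex.exp (-Complex.I * ((∑ j, p.2.2.2.1 j * a j : ℝ) : ℂ)) *
      (u.2.1 - Complex.I * ((∑ j, u.2.2.2.1 j * a j : ℝ) : ℂ) * p.2.1),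
   fun i => Complex.exp (-Complex.I * ((∑ j, p.2.2.2.1 j * b i j : ℝ) : ℂ)) *
      (u.2.2.1 i - Complex.I * ((∑ j, u.2.2.2.1 j * b i j : ℝ) : ℂ) * p.2.2.1 i),
   u.2.2.2.1,
   u.2.2.2.2 +
     (∑ i, (2 * ((p.2.2.1 i).re * (u.2.2.1 i).re + (p.2.2.1 i).im * (u.2.2.1 i).im)) • b i) +
     (u.1.re * p.2.1.im + p.1.re * u.2.1.im - (u.1.im * p.2.1.re + p.1.im * u.2.1.re)) • a)

lemma hasFDerivAt_expPhase (k m : ℕ) (c : Fin k → ℝ) (p : ModelSpace k m) :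
    HasFDerivAt
      (fun p : ModelSpace k m =>
        Complex.exp (-Complex.I * ((∑ j, p.2.2.2.1 j * c j : ℝ) : ℂ)))
      (Complex.exp (-Complex.I * ((∑ j, p.2.2.2.1 j * c j : ℝ) : ℂ)) •
        ((-Complex.I) • (Complex.ofRealCLM.comp (ZLa k m c)))) p := by
  have hg : HasFDerivAt
      (fun p : ModelSpace k m => -Complex.I * ((∑ j, p.2.2.2.1 j * c j : ℝ) : ℂ))
      ((-Complex.I) • (Complex.ofRealCLM.comp (ZLa k m c))) p := by
    have h : (fun p : ModelSpace k m => -Complex.I * ((∑ j, p.2.2.2.1 j * c j : ℝ) : ℂ)) =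
        ⇑((-Complex.I) • (Complex.ofRealCLM.comp (ZLa k m c))) := by
      funext q
      simp [smul_eq_mul, mul_comm]
    rw [h]
    exact ((-Complex.I) • (Complex.ofRealCLM.comp (ZLa k m c))).hasFDerivAt
  exact hg.cexp

lemma fderiv_zetaB_apply (k m : ℕ) (a : Fin k → ℝ) (b : Fin m → Fin k → ℝ)
    (p u : ModelSpace k m) :
    fderiv ℝ (zetaB k m a b) p u = Ddir k m a b p u := by
  classical
  have h1 : HasFDerivAt (fun p : ModelSpace k m =>
      Complex.exp (-Complex.I * ((∑ j, p.2.2.2.1 j * a j : ℝ) : ℂ)) * p.1) _ p :=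
    (hasFDerivAt_expPhase k m a p).mul ((ZP1 k m).hasFDerivAt)
  have h2 : HasFDerivAt (fun p : ModelSpace k m =>
      Complex.exp (-Complex.I * ((∑ j, p.2.2.2.1 j * a j : ℝ) : ℂ)) * p.2.1) _ p :=
    (hasFDerivAt_expPhase k m a p).mul ((ZP2 k m).hasFDerivAt)
  have h3 : HasFDerivAt (fun p : ModelSpace k m => fun i : Fin m =>
      Complex.exp (-Complex.I * ((∑ j, p.2.2.2.1 j * b i j : ℝ) : ℂ)) * p.2.2.1 i) _ p :=
    hasFDerivAt_pi.2 (fun i =>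
      (hasFDerivAt_expPhase k m (b i) p).mul
        (((ContinuousLinearMap.proj i).comp (ZPw k m)).hasFDerivAt))
  have h4 : HasFDerivAt (fun p : ModelSpace k m => p.2.2.2.1) _ p := (ZPth k m).hasFDerivAt
  have hre : ∀ i : Fin m, HasFDerivAt (fun p : ModelSpace k m => (p.2.2.1 i).re)
      (Complex.reCLM.comp ((ContinuousLinearMap.proj i).comp (ZPw k m))) p :=
    fun i => (Complex.reCLM.comp ((ContinuousLinearMap.proj i).comp (ZPw k m))).hasFDerivAt
  have him : ∀ i : Fin m, HasFDerivAt (fun p : ModelSpace k m => (p.2.2.1 i).im)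
      (Complex.imCLM.comp ((ContinuousLinearMap.proj i).comp (ZPw k m))) p :=
    fun i => (Complex.imCLM.comp ((ContinuousLinearMap.proj i).comp (ZPw k m))).hasFDerivAt
  have hns : ∀ i : Fin m, HasFDerivAt (fun p : ModelSpace k m => Complex.normSq (p.2.2.1 i))
      (((p.2.2.1 i).re • (Complex.reCLM.comp ((ContinuousLinearMap.proj i).comp (ZPw k m))) +
        (p.2.2.1 i).re • (Complex.reCLM.comp ((ContinuousLinearMap.proj i).comp (ZPw k m)))) +
       ((p.2.2.1 i).im • (Complex.imCLM.comp ((ContinuousLinearMap.proj i).comp (ZPw k m))) +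
        (p.2.2.1 i).im • (Complex.imCLM.comp ((ContinuousLinearMap.proj i).comp (ZPw k m))))) p := by
    intro i
    have hrw : (fun p : ModelSpace k m => Complex.normSq (p.2.2.1 i)) =
        fun p : ModelSpace k m =>
          (p.2.2.1 i).re * (p.2.2.1 i).re + (p.2.2.1 i).im * (p.2.2.1 i).im :=
      funext fun p => Complex.normSq_apply _
    rw [hrw]
    exact ((hre i).mul (hre i)).add ((him i).mul (him i))
  have hq2 : HasFDerivAt (fun p : ModelSpace k m => q2C p.1 p.2.1)
      ((p.1.re • (Complex.imCLM.comp (ZP2 k m)) + p.2.1.im • (Complex.reCLM.comp (ZP1 k m))) -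
       (p.1.im • (Complex.reCLM.comp (ZP2 k m)) + p.2.1.re • (Complex.imCLM.comp (ZP1 k m)))) p := by
    have hrw : (fun p : ModelSpace k m => q2C p.1 p.2.1) =
        fun p : ModelSpace k m => p.1.re * p.2.1.im - p.1.im * p.2.1.re := by
      funext q
      simp [q2C, Complex.mul_im]
      ring
    rw [hrw]
    exact (((Complex.reCLM.comp (ZP1 k m)).hasFDerivAt).mul
            ((Complex.imCLM.comp (ZP2 k m)).hasFDerivAt)).sub
          (((Complex.imCLM.comp (ZP1 k m)).hasFDerivAt).mul
            ((Complex.reCLM.comp (ZP2 k m)).hasFDerivAt))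
  have h5 : HasFDerivAt (fun p : ModelSpace k m =>
      p.2.2.2.2 + (∑ i, Complex.normSq (p.2.2.1 i) • b i) + q2C p.1 p.2.1 • a) _ p :=
    (((ZPI k m).hasFDerivAt).add
      (HasFDerivAt.fun_sum (fun i _ => (hns i).smul_const (b i)))).add (hq2.smul_const a)
  have H : HasFDerivAt (zetaB k m a b) _ p := h1.prodMk (h2.prodMk (h3.prodMk (h4.prodMk h5)))
  rw [H.fderiv]
  simp only [ContinuousLinearMap.prod_apply, ContinuousLinearMap.add_apply,
    ContinuousLinearMap.coe_smul', ContinuousLinearMap.coe_comp', Pi.smul_apply,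
    Function.comp_apply, ContinuousLinearMap.smulRight_apply, ContinuousLinearMap.pi_apply,
    ContinuousLinearMap.proj_apply, ContinuousLinearMap.coe_sub', Pi.sub_apply,
    ZP1_apply, ZP2_apply, ZPw_apply, ZPth_apply, ZPI_apply, ZLa_apply,
    Complex.ofRealCLM_apply, Complex.reCLM_apply, Complex.imCLM_apply,
    ContinuousLinearMap.sum_apply, smul_eq_mul, Ddir, Prod.mk.injEq]
  refine ⟨by ring, by ring, funext fun i => ?_, trivial, funext fun j => ?_⟩
  · simp only [ContinuousLinearMap.pi_apply, ContinuousLinearMap.add_apply,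
      ContinuousLinearMap.coe_smul', Pi.smul_apply, ContinuousLinearMap.coe_comp',
      Function.comp_apply, ContinuousLinearMap.proj_apply, ZPw_apply, ZLa_apply,
      Complex.ofRealCLM_apply, smul_eq_mul]
    ring
  · simp only [Pi.add_apply, Finset.sum_apply, Pi.smul_apply, smul_eq_mul]
    rw [show (∑ x : Fin m,
          ((p.2.2.1 x).re * (u.2.2.1 x).re + (p.2.2.1 x).re * (u.2.2.1 x).re +
            ((p.2.2.1 x).im * (u.2.2.1 x).im + (p.2.2.1 x).im * (u.2.2.1 x).im)) * b x j) =
        ∑ x : Fin m, 2 * ((p.2.2.1 x).re * (u.2.2.1 x).re +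
          (p.2.2.1 x).im * (u.2.2.1 x).im) * b x j from
      Finset.sum_congr rfl fun x _ => by ring]
    ring

lemma focus_calc (z₁ z₂ u₁ u₂ v₁ v₂ : ℂ) (su sv : ℝ) :
    ((starRingEnd ℂ) (u₁ - Complex.I * (su : ℂ) * z₁) * (v₂ - Complex.I * (sv : ℂ) * z₂) -
      (starRingEnd ℂ) (v₁ - Complex.I * (sv : ℂ) * z₁) * (u₂ - Complex.I * (su : ℂ) * z₂)).re =
    ((starRingEnd ℂ) u₁ * v₂ - (starRingEnd ℂ) v₁ * u₂).re +
      sv * (u₁.re * z₂.im + z₁.re * u₂.im - (u₁.im * z₂.re + z₁.im * u₂.re)) -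
      su * (v₁.re * z₂.im + z₁.re * v₂.im - (v₁.im * z₂.re + z₁.im * v₂.re)) := by
  simp only [Complex.sub_re, Complex.sub_im, Complex.mul_re, Complex.mul_im,
    Complex.conj_re, Complex.conj_im, Complex.I_re, Complex.I_im,
    Complex.ofReal_re, Complex.ofReal_im, map_sub, map_mul, Complex.conj_I,
    Complex.conj_ofReal, Complex.neg_re, Complex.neg_im]
  ring

lemma ell_calc (w ui vi : ℂ) (tu tv : ℝ) :
    2 * ((ui - Complex.I * (tu : ℂ) * w) *
        (starRingEnd ℂ) (vi - Complex.I * (tv : ℂ) * w)).im =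
    2 * (ui * (starRingEnd ℂ) vi).im +
      tv * (2 * (w.re * ui.re + w.im * ui.im)) -
      tu * (2 * (w.re * vi.re + w.im * vi.im)) := by
  simp only [Complex.sub_re, Complex.sub_im, Complex.mul_re, Complex.mul_im,
    Complex.conj_re, Complex.conj_im, Complex.I_re, Complex.I_im,
    Complex.ofReal_re, Complex.ofReal_im, map_sub, map_mul, Complex.conj_I,
    Complex.conj_ofReal, Complex.neg_re, Complex.neg_im]
  ring

lemma swap_sum {k m : ℕ} (b : Fin m → Fin k → ℝ) (c : Fin m → ℝ) (θ : Fin k → ℝ) :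
    ∑ j, θ j * (∑ i, c i * b i j) = ∑ i, (∑ j, θ j * b i j) * c i := by
  simp only [Finset.mul_sum]
  rw [Finset.sum_comm]
  refine Finset.sum_congr rfl fun i _ => ?_
  rw [Finset.sum_mul]
  exact Finset.sum_congr rfl fun j _ => by ring

lemma pull_const {k : ℕ} (c : ℝ) (θ g : Fin k → ℝ) :
    ∑ j, θ j * (c * g j) = (∑ j, θ j * g j) * c := by
  rw [Finset.sum_mul]
  exact Finset.sum_congr rfl fun j _ => by ring

lemma omega_Ddir (k m : ℕ) (a : Fin k → ℝ) (b : Fin m → Fin k → ℝ)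
    (p u v : ModelSpace k m) :
    omegaModel k m (Ddir k m a b p u) (Ddir k m a b p v) = omegaModel k m u v := by
  simp only [omegaModel, Ddir, keyConj, keyMulConj, focus_calc, ell_calc,
    Pi.add_apply, Finset.sum_apply, Pi.smul_apply, smul_eq_mul]
  simp only [mul_add, Finset.sum_add_distrib, Finset.sum_sub_distrib]
  rw [swap_sum b _ u.2.2.2.1, swap_sum b _ v.2.2.2.1, pull_const _ u.2.2.2.1 a,
    pull_const _ v.2.2.2.1 a]
  simp only [mul_add, Finset.sum_add_distrib]
  ring_nf

end Aux

theorem zetaB_smooth_preserves_momentMap_and_omega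
    (k m : ℕ) (a : Fin k → ℝ) (b : Fin m → Fin k → ℝ) :
    ContDiff ℝ (⊤ : ℕ∞) (zetaB k m a b) ∧
    (∀ p : ModelSpace k m,
      q1C (zetaB k m a b p).1 (zetaB k m a b p).2.1 = q1C p.1 p.2.1 ∧
      q2C (zetaB k m a b p).1 (zetaB k m a b p).2.1 = q2C p.1 p.2.1 ∧
      ∀ i : Fin m,
        Complex.normSq ((zetaB k m a b p).2.2.1 i) = Complex.normSq (p.2.2.1 i)) ∧
    (∀ p u v : ModelSpace k m,
      omegaModel k m (fderiv ℝ (zetaB k m a b) p u) (fderiv ℝ (zetaB k m a b) p v) =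
        omegaModel k m u v) := by
  constructor
  · -- smoothness
    have hsum : ∀ c : Fin k → ℝ,
        ContDiff ℝ (⊤ : ℕ∞) (fun p : ModelSpace k m => (∑ j, p.2.2.2.1 j * c j)) := fun c => by
      rw [sum_mul_eq_ZLa]; exact (ZLa k m c).contDiff
    have hexp : ∀ c : Fin k → ℝ, ContDiff ℝ (⊤ : ℕ∞) (fun p : ModelSpace k m =>
        Complex.exp (-Complex.I * ((∑ j, p.2.2.2.1 j * c j : ℝ) : ℂ))) := fun c => by
      have h1 : ContDiff ℝ (⊤ : ℕ∞) (fun p : ModelSpace k m =>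
          -Complex.I * ((∑ j, p.2.2.2.1 j * c j : ℝ) : ℂ)) :=
        contDiff_const.mul (Complex.ofRealCLM.contDiff.comp (hsum c))
      exact ((Complex.contDiff_exp : ContDiff ℂ (⊤ : ℕ∞) Complex.exp).restrict_scalars ℝ).comp h1
    have hwi : ∀ i : Fin m, ContDiff ℝ (⊤ : ℕ∞) (fun p : ModelSpace k m => p.2.2.1 i) :=
      fun i => ((ContinuousLinearMap.proj i).comp (ZPw k m)).contDiff
    have hns : ∀ i : Fin m,
        ContDiff ℝ (⊤ : ℕ∞) (fun p : ModelSpace k m => Complex.normSq (p.2.2.1 i)) := fun i => by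
      have hrw : (fun p : ModelSpace k m => Complex.normSq (p.2.2.1 i)) =
          fun p : ModelSpace k m =>
            (p.2.2.1 i).re * (p.2.2.1 i).re + (p.2.2.1 i).im * (p.2.2.1 i).im :=
        funext fun p => Complex.normSq_apply _
      rw [hrw]
      have hr : ContDiff ℝ (⊤ : ℕ∞) (fun p : ModelSpace k m => (p.2.2.1 i).re) :=
        (Complex.reCLM.comp ((ContinuousLinearMap.proj i).comp (ZPw k m))).contDiff
      have hi : ContDiff ℝ (⊤ : ℕ∞) (fun p : ModelSpace k m => (p.2.2.1 i).im) :=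
        (Complex.imCLM.comp ((ContinuousLinearMap.proj i).comp (ZPw k m))).contDiff
      exact (hr.mul hr).add (hi.mul hi)
    have hq2 : ContDiff ℝ (⊤ : ℕ∞) (fun p : ModelSpace k m => q2C p.1 p.2.1) := by
      have hrw : (fun p : ModelSpace k m => q2C p.1 p.2.1) =
          fun p : ModelSpace k m => p.1.re * p.2.1.im - p.1.im * p.2.1.re := by
        funext q
        simp [q2C, Complex.mul_im]
        ring
      rw [hrw]
      exact (((Complex.reCLM.comp (ZP1 k m)).contDiff).mul
              ((Complex.imCLM.comp (ZP2 k m)).contDiff)).sub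
            (((Complex.imCLM.comp (ZP1 k m)).contDiff).mul
              ((Complex.reCLM.comp (ZP2 k m)).contDiff))
    exact ContDiff.prodMk ((hexp a).mul (ZP1 k m).contDiff)
      (ContDiff.prodMk ((hexp a).mul (ZP2 k m).contDiff)
        (ContDiff.prodMk (contDiff_pi.2 fun i => (hexp (b i)).mul (hwi i))
          (ContDiff.prodMk (ZPth k m).contDiff
            (ContDiff.add (ContDiff.add (ZPI k m).contDiff
              (ContDiff.sum fun i _ => (hns i).smul contDiff_const))
              (hq2.smul contDiff_const)))))
  constructor
  · -- moment map preservation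
    intro p
    refine ⟨?_, ?_, fun i => ?_⟩
    · simp only [zetaB, q1C, keyConj]
    · simp only [zetaB, q2C, keyConj]
    · simp only [zetaB]
      rw [Complex.normSq_mul, normSq_expI, one_mul]
  · -- symplectomorphism
    intro p u v
    rw [fderiv_zetaB_apply k m a b p u, fderiv_zetaB_apply k m a b p v]
    exact omega_Ddir k m a b p u v
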